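/- arXiv:1509.08567 — 2 statements merged into one kernel-verified Lean document; each statement's English description precedes it below -/
import Mathlib

section
/- Let M be a metric space, f : M → M continuous with fixed point x_e, and let V : M → ℝ be continuous with V(x_e) = 0, V(x) > 0 for x ≠ x_e, satisfying α₁(d(x,x_e)) ≤ V(x) on a compact neighborhood K of x_e for a class-K function α₁, and suppose V(f(x)) - V(x) < 0 for all x ∈ K \ {x_e}, with f(K) ⊆ K. Then for every x₀ ∈ K, the orbit f^k(x₀) converges to x_e as k → ∞. -/
/-!
Along an orbit in the invariant compact set `K`, the values of `V` decrease and are bounded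
below, so they converge to some `c`. Every cluster point `y` of the orbit then satisfies
`V y = c`, and so does its image `f y`, which is a cluster point along the shifted
subsequence. Strict decrease off `x_e` forces `y = x_e`, and an orbit in a compact set whose
only cluster point is `x_e` converges to `x_e`.
-/

open Filter Function Set Topology

section Lyapunov

variable {X : Type*} {f : X → X} {V : X → ℝ} {K : Set X} {x₀ : X}

theorem Set.MapsTo.antitone_comp_iterate (hinv : MapsTo f K K) (hle : ∀ x ∈ K, V (f x) ≤ V x)
    (hx₀ : x₀ ∈ K) : Antitone fun k => V (f^[k] x₀) :=
  antitone_nat_of_succ_le fun k => by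
    rw [iterate_succ_apply']
    exact hle _ (hinv.iterate k hx₀)

variable [TopologicalSpace X]

theorem IsCompact.tendsto_comp_iterate_ciInf (hK : IsCompact K) (hV : ContinuousOn V K)
    (hinv : MapsTo f K K) (hle : ∀ x ∈ K, V (f x) ≤ V x) (hx₀ : x₀ ∈ K) :
    Tendsto (fun k => V (f^[k] x₀)) atTop (𝓝 (⨅ k, V (f^[k] x₀))) := by
  refine tendsto_atTop_ciInf (hinv.antitone_comp_iterate hle hx₀) ?_
  exact (hK.bddBelow_image hV).mono
    (range_subset_iff.2 fun k => mem_image_of_mem V (hinv.iterate k hx₀))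

theorem tendsto_iterate_of_strict_lyapunov [FirstCountableTopology X] (hf : Continuous f)
    {x_e : X} (hfix : f x_e = x_e) (hV : Continuous V) (hK : IsCompact K)
    (hinv : MapsTo f K K) (hdec : ∀ x ∈ K, x ≠ x_e → V (f x) < V x) (hx₀ : x₀ ∈ K) :
    Tendsto (fun k => f^[k] x₀) atTop (𝓝 x_e) := by
  have hle : ∀ x ∈ K, V (f x) ≤ V x := fun x hx => by
    rcases eq_or_ne x x_e with rfl | hne
    · rw [hfix]
    · exact (hdec x hx hne).le
  have hc := hK.tendsto_comp_iterate_ciInf hV.continuousOn hinv hle hx₀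
  set c := ⨅ k, V (f^[k] x₀)
  refine tendsto_of_subseq_tendsto fun ψ hψ => ?_
  obtain ⟨y, hyK, φ, hφ, hy⟩ := hK.tendsto_subseq fun n => hinv.iterate (ψ n) hx₀
  refine ⟨φ, ?_⟩
  have hψφ : Tendsto (ψ ∘ φ) atTop atTop := hψ.comp hφ.tendsto_atTop
  have hVy : V y = c :=
    tendsto_nhds_unique ((hV.tendsto y).comp hy) (hc.comp hψφ)
  have hVfy : V (f y) = c := by
    have hfy : Tendsto (fun n => f^[ψ (φ n) + 1] x₀) atTop (𝓝 (f y)) := by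
      simpa only [iterate_succ_apply', comp_def] using (hf.tendsto y).comp hy
    exact tendsto_nhds_unique ((hV.tendsto (f y)).comp hfy)
      (hc.comp ((tendsto_add_atTop_nat 1).comp hψφ))
  obtain rfl : y = x_e := by
    by_contra hne
    exact (hdec y hyK hne).ne (hVfy.trans hVy.symm)
  exact hy

end Lyapunov

theorem stmt_1_general {M : Type*} [MetricSpace M] (f : M → M) (hf : Continuous f)
    (x_e : M) (hfix : f x_e = x_e)
    (V : M → ℝ) (hV : Continuous V)
    (K : Set M) (hK : IsCompact K)
    (hdec : ∀ x ∈ K, x ≠ x_e → V (f x) - V x < 0)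
    (hinv : Set.MapsTo f K K) :
    ∀ x₀ ∈ K, Filter.Tendsto (fun k => f^[k] x₀) Filter.atTop (nhds x_e) := fun _ hx₀ =>
  tendsto_iterate_of_strict_lyapunov hf hfix hV hK hinv
    (fun x hx hne => sub_neg.mp (hdec x hx hne)) hx₀

theorem stmt_1 {M : Type*} [MetricSpace M] (f : M → M) (hf : Continuous f)
    (x_e : M) (hfix : f x_e = x_e)
    (V : M → ℝ) (hV : Continuous V) (hVe : V x_e = 0)
    (hVpos : ∀ x, x ≠ x_e → 0 < V x)
    (K : Set M) (hK : IsCompact K) (hKnbhd : K ∈ nhds x_e)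
    (α₁ : ℝ → ℝ) (hα₁mono : StrictMonoOn α₁ (Set.Ici 0))
    (hα₁cont : ContinuousOn α₁ (Set.Ici 0)) (hα₁0 : α₁ 0 = 0)
    (hlow : ∀ x ∈ K, α₁ (dist x x_e) ≤ V x)
    (hdec : ∀ x ∈ K, x ≠ x_e → V (f x) - V x < 0)
    (hinv : Set.MapsTo f K K) :
    ∀ x₀ ∈ K, Filter.Tendsto (fun k => f^[k] x₀) Filter.atTop (nhds x_e) :=
  stmt_1_general f hf x_e hfix V hV K hK hdec hinv
end

section
/- (Recursive feasibility of MPC.) Let f : M × U → M, let X, U_c, X_T be constraint sets with X_T ⊆ X, and let κ : M → U satisfy: for all x ∈ X_T, κ(x) ∈ U_c and f(x, κ(x)) ∈ X_T. Define D_N as the set of states x for which there exists a control sequence (u₀,…,u_{N-1}) ∈ U_c^N with all predicted states in X and the N-step predicted state in X_T. Then for any x ∈ D_N and any feasible sequence (u₀,…,u_{N-1}) for x, the successor state f(x, u₀) also lies in D_N; in particular D_N is forward invariant under the MPC feedback. -/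
/-! The successor state is certified by the shifted control sequence `u₁, …, u_{N-1}, κ(x_N)`:
its first `N - 1` predicted states are those of the old prediction, and its final step applies
the terminal law `κ`, which keeps the terminal state in the invariant set `X_T ⊆ X`. -/

/-- Predicted trajectory: `traj f x u k` is the state after `k` steps of
`x_{i+1} = f x_i u_i` starting from `x`. -/
def traj {M U : Type*} (f : M → U → M) (x : M) (u : ℕ → U) : ℕ → M
  | 0 => x
  | k + 1 => f (traj f x u k) (u k)

section Trajectory

variable {M U : Type*} (f : M → U → M)

theorem traj_succ_eq_traj_tail (x : M) (u : ℕ → U) (k : ℕ) :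
    traj f x u (k + 1) = traj f (f x (u 0)) (fun i => u (i + 1)) k := by
  induction k with
  | zero => rfl
  | succ k ih => exact congrArg (f · (u (k + 1))) ih

theorem traj_congr {x : M} {u v : ℕ → U} {k : ℕ} (h : ∀ i < k, u i = v i) :
    traj f x u k = traj f x v k := by
  induction k with
  | zero => rfl
  | succ k ih =>
    simp only [traj, ih fun i hi => h i (by omega), h k (by omega)]

def IsFeasible (X : Set M) (Uc : Set U) (XT : Set M) (N : ℕ) (x : M) (u : ℕ → U) : Prop :=
  (∀ i < N, u i ∈ Uc) ∧ (∀ i < N, traj f x u i ∈ X) ∧ traj f x u N ∈ XT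

def shiftedControl (κ : M → U) (N : ℕ) (x : M) (u : ℕ → U) : ℕ → U :=
  fun i => if i + 1 < N then u (i + 1) else κ (traj f x u N)

variable (κ : M → U) {N : ℕ}

theorem traj_shiftedControl_of_lt (x : M) (u : ℕ → U) {k : ℕ} (hk : k < N) :
    traj f (f x (u 0)) (shiftedControl f κ N x u) k = traj f x u (k + 1) := by
  rw [traj_succ_eq_traj_tail]
  exact traj_congr f fun i hi => if_pos (by omega)

theorem traj_shiftedControl_self (x : M) (u : ℕ → U) (hN : 0 < N) :
    traj f (f x (u 0)) (shiftedControl f κ N x u) N = f (traj f x u N) (κ (traj f x u N)) := by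
  obtain ⟨n, rfl⟩ := Nat.exists_eq_add_of_lt hN
  rw [zero_add, traj, traj_shiftedControl_of_lt f κ x u (Nat.lt_succ_self n)]
  simp [shiftedControl]

theorem IsFeasible.step {X : Set M} {Uc : Set U} {XT : Set M} (hXT : XT ⊆ X)
    (hκ : ∀ y ∈ XT, κ y ∈ Uc ∧ f y (κ y) ∈ XT) (hN : 0 < N) {x : M} {u : ℕ → U}
    (hu : IsFeasible f X Uc XT N x u) :
    IsFeasible f X Uc XT N (f x (u 0)) (shiftedControl f κ N x u) := by
  obtain ⟨hUc, hX, hT⟩ := hu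
  refine ⟨fun i hi => ?_, fun i hi => ?_, ?_⟩
  · unfold shiftedControl
    split_ifs with h
    · exact hUc _ h
    · exact (hκ _ hT).1
  · rw [traj_shiftedControl_of_lt f κ x u hi]
    rcases (Nat.succ_le_of_lt hi).lt_or_eq with h | h
    · exact hX _ h
    · rw [← Nat.succ_eq_add_one, h]
      exact hXT hT
  · rw [traj_shiftedControl_self f κ x u hN]
    exact (hκ _ hT).2

end Trajectory

/-- Recursive feasibility of MPC. -/
theorem stmt_7 {M U : Type*} (f : M → U → M)
    (X : Set M) (Uc : Set U) (XT : Set M) (hXT : XT ⊆ X)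
    (κ : M → U) (hκ : ∀ x ∈ XT, κ x ∈ Uc ∧ f x (κ x) ∈ XT)
    (N : ℕ) (hN : 0 < N)
    (DN : Set M)
    (hDN : ∀ x, x ∈ DN ↔ ∃ u : ℕ → U,
      (∀ i < N, u i ∈ Uc) ∧ (∀ i < N, traj f x u i ∈ X) ∧ traj f x u N ∈ XT) :
    ∀ x ∈ DN, ∀ u : ℕ → U,
      ((∀ i < N, u i ∈ Uc) ∧ (∀ i < N, traj f x u i ∈ X) ∧ traj f x u N ∈ XT) →
      f x (u 0) ∈ DN := by
  intro x _ u hu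
  exact (hDN _).2 ⟨_, IsFeasible.step f κ hXT hκ hN hu⟩
end
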